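/- arXiv:math/0009212 — 2 statements merged into one kernel-verified Lean document; each statement's English description precedes it below -/
import Mathlib

section
/- If the nonzero real constants ν_1,...,ν_n are independent over the integers (i.e., Σ_j γ_j ν_j = 0 with γ_j ∈ ℤ implies all γ_j = 0), then for every odd k the restriction of D = Σ_j ν_j (q_j ∂/∂η_j − η_j ∂/∂q_j) to homogeneous polynomials of degree k has trivial kernel: D^{(k)} is injective. -/
/-!
In the complex coordinates `z_j = q_j + iη_j`, `w_j = q_j - iη_j` the operator `D` becomes the
diagonal derivation `Σ_j iν_j (z_j ∂/∂z_j - w_j ∂/∂w_j)`, so each monomial `z^a w^b` is an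
eigenvector with eigenvalue `i Σ_j (a_j - b_j) ν_j`. By independence over `ℤ` this eigenvalue
vanishes only when `a = b`, and then the degree `|a| + |b|` is even.
-/

open MvPolynomial

/-- `D = Σ_j ν_j (q_j ∂/∂η_j − η_j ∂/∂q_j)` (`Sum.inl j ↦ q_j`, `Sum.inr j ↦ η_j`). -/
noncomputable def Dop {n : ℕ} (ν : Fin n → ℝ) (p : MvPolynomial (Fin n ⊕ Fin n) ℝ) :
    MvPolynomial (Fin n ⊕ Fin n) ℝ :=
  ∑ j : Fin n, ν j • (X (Sum.inl j) * pderiv (Sum.inr j) p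
    - X (Sum.inr j) * pderiv (Sum.inl j) p)

namespace MvPolynomial

variable {σ R : Type*} [CommSemiring R]

theorem coeff_X_mul_pderiv (i : σ) (e : σ →₀ ℕ) (p : MvPolynomial σ R) :
    coeff e (X i * pderiv i p) = e i * coeff e p := by
  classical
  induction p using MvPolynomial.induction_on' with
  | monomial d c =>
    rw [X_mul_pderiv_monomial, coeff_smul, coeff_monomial, nsmul_eq_mul]
    split_ifs with h
    · rw [h]
    · simp
  | add p q hp hq => simp only [mul_add, map_add, coeff_add, hp, hq]

theorem algHom_apply_derivation {B : Type*} [CommSemiring B] [Algebra R B]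
    (φ : MvPolynomial σ R →ₐ[R] B) (D : Derivation R (MvPolynomial σ R) (MvPolynomial σ R))
    (E : Derivation R B B) (h : ∀ i, φ (D (X i)) = E (φ (X i))) (p : MvPolynomial σ R) :
    φ (D p) = E (φ p) := by
  induction p using MvPolynomial.induction_on with
  | C a => rw [← algebraMap_eq, D.map_algebraMap, AlgHom.commutes, E.map_algebraMap, map_zero]
  | add p q hp hq => rw [map_add, map_add, map_add, hp, hq, map_add]
  | mul_X p i hp =>
    rw [D.leibniz, map_mul, E.leibniz, map_add, smul_eq_mul, smul_eq_mul, map_mul, map_mul, hp, h,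
      smul_eq_mul, smul_eq_mul]

variable [Fintype σ]

noncomputable def weightedEuler (w : σ → R) : Derivation R (MvPolynomial σ R) (MvPolynomial σ R) :=
  ∑ i, w i • (X i : MvPolynomial σ R) • pderiv i

theorem weightedEuler_apply (w : σ → R) (p : MvPolynomial σ R) :
    weightedEuler w p = ∑ i, w i • (X i * pderiv i p) := by
  change Derivation.coeFnAddMonoidHom (∑ i, _) p = _
  simp [Finset.sum_apply]

theorem weightedEuler_X [DecidableEq σ] (w : σ → R) (i : σ) :
    weightedEuler w (X i) = w i • X i := by
  simp [weightedEuler_apply, Pi.single_apply]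

theorem coeff_weightedEuler (w : σ → R) (e : σ →₀ ℕ) (p : MvPolynomial σ R) :
    coeff e (weightedEuler w p) = (∑ i, w i * e i) * coeff e p := by
  simp only [weightedEuler_apply, coeff_sum, coeff_smul, coeff_X_mul_pderiv, smul_eq_mul,
    Finset.sum_mul, mul_assoc]

end MvPolynomial

section ComplexCoordinates

variable {n : ℕ}

/-- On the complex side `Sum.inl j` stands for `z_j = q_j + iη_j` and `Sum.inr j` for
`w_j = q_j - iη_j`; this expresses `q_j` and `η_j` in terms of them. -/
noncomputable def qηInZW : Fin n ⊕ Fin n → MvPolynomial (Fin n ⊕ Fin n) ℂ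
  | Sum.inl j => (1 / 2 : ℂ) • (X (Sum.inl j) + X (Sum.inr j))
  | Sum.inr j => (-Complex.I / 2 : ℂ) • (X (Sum.inl j) - X (Sum.inr j))

noncomputable def zwInQη : Fin n ⊕ Fin n → MvPolynomial (Fin n ⊕ Fin n) ℂ
  | Sum.inl j => X (Sum.inl j) + Complex.I • X (Sum.inr j)
  | Sum.inr j => X (Sum.inl j) - Complex.I • X (Sum.inr j)

noncomputable def toZW : MvPolynomial (Fin n ⊕ Fin n) ℝ →ₐ[ℝ] MvPolynomial (Fin n ⊕ Fin n) ℂ :=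
  aeval qηInZW

theorem aeval_zwInQη_toZW (p : MvPolynomial (Fin n ⊕ Fin n) ℝ) :
    aeval zwInQη (toZW p) = map (algebraMap ℝ ℂ) p := by
  change (((aeval zwInQη).restrictScalars ℝ).comp toZW).toRingHom p = _
  congr 1
  refine ringHom_ext (fun a => by simp [toZW]) fun i => ?_
  obtain j | j := i <;>
  · simp only [toZW, qηInZW, zwInQη, AlgHom.toRingHom_eq_coe, RingHom.coe_coe,
      AlgHom.coe_comp, Function.comp_apply, aeval_X, AlgHom.coe_restrictScalars', map_smul,
      map_add, map_sub, map_X]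
    match_scalars <;> ring_nf <;> simp [Complex.I_sq]

theorem toZW_injective : Function.Injective (toZW (n := n)) := fun p q h =>
  map_injective _ (algebraMap ℝ ℂ).injective <| by
    rw [← aeval_zwInQη_toZW, ← aeval_zwInQη_toZW, h]

theorem isHomogeneous_toZW {p : MvPolynomial (Fin n ⊕ Fin n) ℝ} {k : ℕ}
    (hp : p.IsHomogeneous k) : (toZW p).IsHomogeneous k := by
  have hlin : ∀ i, (qηInZW (n := n) i).IsHomogeneous 1 := by
    rintro (j | j) <;> simp only [qηInZW, smul_eq_C_mul]
    · exact ((isHomogeneous_X ℂ _).add (isHomogeneous_X ℂ _)).C_mul _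
    · exact ((isHomogeneous_X ℂ _).sub (isHomogeneous_X ℂ _)).C_mul _
  simpa [toZW] using hp.aeval qηInZW hlin

noncomputable def dopDerivation (ν : Fin n → ℝ) :
    Derivation ℝ (MvPolynomial (Fin n ⊕ Fin n) ℝ) (MvPolynomial (Fin n ⊕ Fin n) ℝ) :=
  ∑ j, ν j • ((X (Sum.inl j) : MvPolynomial (Fin n ⊕ Fin n) ℝ) • pderiv (Sum.inr j)
    - (X (Sum.inr j) : MvPolynomial (Fin n ⊕ Fin n) ℝ) • pderiv (Sum.inl j))

theorem dopDerivation_apply (ν : Fin n → ℝ) (p : MvPolynomial (Fin n ⊕ Fin n) ℝ) :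
    dopDerivation ν p = Dop ν p := by
  change Derivation.coeFnAddMonoidHom (∑ j, _) p = _
  simp [Dop, Finset.sum_apply]

theorem Dop_X_inl (ν : Fin n → ℝ) (j : Fin n) :
    Dop ν (X (Sum.inl j)) = -(ν j • X (Sum.inr j)) := by
  classical
  simp [Dop, Pi.single_apply]

theorem Dop_X_inr (ν : Fin n → ℝ) (j : Fin n) :
    Dop ν (X (Sum.inr j)) = ν j • X (Sum.inl j) := by
  classical
  simp [Dop, Pi.single_apply]

/-- `D z_j = iν_j z_j` and `D w_j = -iν_j w_j`. -/
noncomputable def zwWeight (ν : Fin n → ℝ) : Fin n ⊕ Fin n → ℂ :=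
  Sum.elim (fun j => Complex.I * ν j) fun j => -(Complex.I * ν j)

theorem toZW_Dop (ν : Fin n → ℝ) (p : MvPolynomial (Fin n ⊕ Fin n) ℝ) :
    toZW (Dop ν p) = weightedEuler (zwWeight ν) (toZW p) := by
  classical
  rw [← dopDerivation_apply]
  refine algHom_apply_derivation toZW _ ((weightedEuler (zwWeight ν)).restrictScalars ℝ)
    (fun i => ?_) p
  obtain j | j := i <;>
  · simp only [dopDerivation_apply, Dop_X_inl, Dop_X_inr, Derivation.restrictScalars_apply,
      toZW, map_neg, map_smul, aeval_X, qηInZW, Derivation.map_smul, map_add, map_sub,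
      weightedEuler_X]
    simp only [zwWeight, Sum.elim_inl, Sum.elim_inr]
    match_scalars <;> simp only [Complex.coe_algebraMap] <;> ring_nf <;>
      simp only [Complex.I_sq] <;> ring

theorem sum_zwWeight_mul (ν : Fin n → ℝ) (d : Fin n ⊕ Fin n →₀ ℕ) :
    ∑ i, zwWeight ν i * d i =
      Complex.I * ((∑ j, (((d (Sum.inl j) : ℤ) - d (Sum.inr j) : ℤ) : ℝ) * ν j : ℝ) : ℂ) := by
  simp only [Fintype.sum_sum_type, zwWeight, Sum.elim_inl, Sum.elim_inr,
    ← Finset.sum_add_distrib]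
  push_cast [Finset.mul_sum]
  exact Finset.sum_congr rfl fun j _ => by ring

theorem even_degree_of_forall_inl_eq_inr {d : Fin n ⊕ Fin n →₀ ℕ}
    (h : ∀ j, d (Sum.inl j) = d (Sum.inr j)) : Even d.degree := by
  simp only [Finsupp.degree_eq_sum, Fintype.sum_sum_type, h]
  exact ⟨_, rfl⟩

end ComplexCoordinates

theorem stmt3_general {n : ℕ} (ν : Fin n → ℝ)
    (hindep : ∀ γ : Fin n → ℤ, (∑ j, (γ j : ℝ) * ν j) = 0 → ∀ j, γ j = 0)
    (k : ℕ) (hk : Odd k) :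
    ∀ p : MvPolynomial (Fin n ⊕ Fin n) ℝ, p.IsHomogeneous k → Dop ν p = 0 → p = 0 := by
  intro p hp hD
  refine toZW_injective ?_
  rw [map_zero]
  by_contra hne
  obtain ⟨d, hd⟩ := exists_coeff_ne_zero hne
  have hEigen : ∑ i, zwWeight ν i * d i = 0 := by
    have h := congrArg (coeff d) (toZW_Dop ν p)
    rw [hD, map_zero, coeff_zero, coeff_weightedEuler, eq_comm] at h
    exact (mul_eq_zero.1 h).resolve_right hd
  have hbal : ∀ j, d (Sum.inl j) = d (Sum.inr j) := by
    rw [sum_zwWeight_mul, mul_eq_zero, Complex.ofReal_eq_zero] at hEigen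
    have hγ := hindep _ (hEigen.resolve_left Complex.I_ne_zero)
    exact fun j => by exact_mod_cast sub_eq_zero.1 (hγ j)
  have hdeg : d.degree = k := by
    rw [Finsupp.degree_eq_weight_one]
    exact isHomogeneous_toZW hp hd
  exact Nat.not_even_iff_odd.2 hk (hdeg ▸ even_degree_of_forall_inl_eq_inr hbal)

theorem stmt3 {n : ℕ} (ν : Fin n → ℝ) (hν : ∀ j, ν j ≠ 0)
    (hindep : ∀ γ : Fin n → ℤ, (∑ j, (γ j : ℝ) * ν j) = 0 → ∀ j, γ j = 0)
    (k : ℕ) (hk : Odd k) :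
    ∀ p : MvPolynomial (Fin n ⊕ Fin n) ℝ, p.IsHomogeneous k → Dop ν p = 0 → p = 0 :=
  stmt3_general ν hindep k hk
end

section
/- If real numbers f_1,f_2,f_3,f_4 satisfy 3(f_1 f_3 + f_2 f_4) − (f_2² + f_3²) = 0, and g_1,...,g_5 are defined by g_1 = −(5/18)(9f_1²+f_2²), g_2 = −(10/9)(3f_1+f_3)f_2, g_3 = −(5/3)(f_2²+f_3²), g_4 = −(10/9)(3f_4+f_2)f_3, g_5 = −(5/18)(9f_4²+f_3²), then the three identities 9g_2² + 4g_3² − 24g_1g_3 − 9g_2g_4 = 0, 9g_4² + 4g_3² − 24g_3g_5 − 9g_2g_4 = 0, and (g_2+g_4)g_3 − 6(g_1g_4 + g_2g_5) = 0 all hold. -/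
/-! After substituting the `gᵢ`, each of the three quartic expressions factors as a polynomial
multiple of the cubic expression `3 (f₁ f₃ + f₂ f₄) - (f₂² + f₃²)`. -/

/-- The cubic Bertrand–Darboux condition implies the quartic Bertrand–Darboux condition
for the associated quartic coefficients. -/
theorem stmt9 (f₁ f₂ f₃ f₄ : ℝ)
    (hBD : 3 * (f₁ * f₃ + f₂ * f₄) - (f₂ ^ 2 + f₃ ^ 2) = 0)
    (g₁ g₂ g₃ g₄ g₅ : ℝ)
    (hg₁ : g₁ = -(5 / 18) * (9 * f₁ ^ 2 + f₂ ^ 2))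
    (hg₂ : g₂ = -(10 / 9) * (3 * f₁ + f₃) * f₂)
    (hg₃ : g₃ = -(5 / 3) * (f₂ ^ 2 + f₃ ^ 2))
    (hg₄ : g₄ = -(10 / 9) * (3 * f₄ + f₂) * f₃)
    (hg₅ : g₅ = -(5 / 18) * (9 * f₄ ^ 2 + f₃ ^ 2)) :
    9 * g₂ ^ 2 + 4 * g₃ ^ 2 - 24 * g₁ * g₃ - 9 * g₂ * g₄ = 0 ∧
    9 * g₄ ^ 2 + 4 * g₃ ^ 2 - 24 * g₃ * g₅ - 9 * g₂ * g₄ = 0 ∧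
    (g₂ + g₄) * g₃ - 6 * (g₁ * g₄ + g₂ * g₅) = 0 := by
  subst hg₁ hg₂ hg₃ hg₄ hg₅
  refine ⟨?_, ?_, ?_⟩
  · linear_combination -(100 / 9) * f₃ * (3 * f₁ + f₃) * hBD
  · linear_combination -(100 / 9) * f₂ * (f₂ + 3 * f₄) * hBD
  · linear_combination -(50 / 27) * (3 * f₁ + f₃) * (f₂ + 3 * f₄) * hBD
end
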